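/- For any integer k ≥ 2 and any pair of finitely supported functions f, g : G → ℂ on an abelian group, ‖f+g‖_{E_k} ≤ ‖|f|‖_{E_k} + ‖|g|‖_{E_k}, where ‖h‖_{E_k} := (Σ_x ((h∘h)(x))^k)^{1/(2k)} with (h₁∘h₂)(x) := Σ_y \overline{h₁(y)} h₂(y+x). In particular, restricted to real-valued functions with k even, ‖·‖_{E_k} is a norm. -/

import Mathlib

open Finset

/-- Correlation with conjugation: `(h₁ ∘ h₂)(x) = Σ_y conj(h₁(y)) h₂(y + x)`. -/
noncomputable def corrC {G : Type*} [AddCommGroup G] (h₁ h₂ : G → ℂ) : G → ℂ :=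
  fun x => ∑ᶠ y : G, (starRingEnd ℂ) (h₁ y) * h₂ (y + x)

/-- `‖h‖_{E_k} = (Σ_x ((h∘h)(x))^k)^{1/(2k)}` (the sum is a nonnegative real;
we take its absolute value to land in `ℝ`). -/
noncomputable def normEkC {G : Type*} [AddCommGroup G] (k : ℕ) (h : G → ℂ) : ℝ :=
  ‖∑ᶠ x : G, (corrC h h x) ^ k‖ ^ ((1 : ℝ) / (2 * k))

/-!
Write `F_u(c) = ∑_{w ∈ c} u(w₁)⋯u(w_k)` for a class `c` of `G^k` modulo the diagonal. Expanding
the `k`-th power and substituting `w' = w + (d,…,d)` gives `∑_d ((u∘v)(d))^k = ∑_c F_u(c) F_v(c)`,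
so `‖u‖_{E_k}^{2k} = ‖F_u‖₂²` and, by Cauchy–Schwarz, `∑_d ((u∘v)(d))^k ≤ (‖u‖_{E_k} ‖v‖_{E_k})^k`.
When all these `k`-th powers are nonnegative (`k` even, or `u, v ≥ 0`) this bounds the `ℓ^k` norm
of `u∘v` by `‖u‖_{E_k} ‖v‖_{E_k}`; splitting `(u+v)∘(u+v)` into four correlations and applying
Minkowski's inequality in `ℓ^k` gives `‖u+v‖_{E_k}² ≤ (‖u‖_{E_k} + ‖v‖_{E_k})²`. For complex `f, g`,
`|((f+g)∘(f+g))(x)| ≤ ((|f|+|g|)∘(|f|+|g|))(x)` reduces the claim to the nonnegative case.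
-/

open Function Pointwise

section Fiber
variable {α β R : Type*} [DecidableEq β] [CommSemiring R]

theorem Finset.sum_mul_sum_fiber_eq_sum_image (S : Finset α) (ρ : α → β) (x y : α → R) :
    ∑ a ∈ S, x a * ∑ b ∈ S with ρ b = ρ a, y b =
      ∑ r ∈ S.image ρ, (∑ a ∈ S with ρ a = r, x a) * ∑ b ∈ S with ρ b = r, y b := by
  rw [← sum_fiberwise_of_maps_to fun a ha => mem_image_of_mem ρ ha]
  refine sum_congr rfl fun r _ => ?_
  rw [sum_mul]
  refine sum_congr rfl fun a ha => ?_
  rw [(mem_filter.1 ha).2]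

end Fiber

section Diagonal
variable {G : Type*} [AddCommGroup G]

/-- The representative of the class of `w` modulo the diagonal `{fun _ => d}` of `G^k`
that vanishes at `i₀`. -/
def diagRep {k : ℕ} (i₀ : Fin k) (w : Fin k → G) : Fin k → G := w - fun _ => w i₀

theorem diagRep_add_const {k : ℕ} (i₀ : Fin k) (w : Fin k → G) (d : G) :
    diagRep i₀ (w + fun _ => d) = diagRep i₀ w := by
  funext i
  simp [diagRep]

theorem eq_add_const_of_diagRep_eq {k : ℕ} {i₀ : Fin k} {w w' : Fin k → G}
    (h : diagRep i₀ w' = diagRep i₀ w) : w' = w + fun _ => w' i₀ - w i₀ := by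
  funext i
  have hi := congrFun h i
  simp only [diagRep, Pi.sub_apply] at hi
  rw [sub_eq_sub_iff_add_eq_add] at hi
  rw [Pi.add_apply, add_sub, ← hi, add_sub_cancel_right]

end Diagonal

section Correlation
variable {G R : Type*} [AddCommGroup G] [CommSemiring R]

def corrOn (s : Finset G) (u v : G → R) (x : G) : R := ∑ y ∈ s, u y * v (y + x)

theorem corrOn_add_add (s : Finset G) (u v : G → R) :
    corrOn s (u + v) (u + v) = corrOn s u u + corrOn s u v + corrOn s v u + corrOn s v v := by
  funext x
  simp only [corrOn, Pi.add_apply, ← sum_add_distrib]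
  exact sum_congr rfl fun _ _ => by ring

variable [DecidableEq G]

def energyOn (s : Finset G) (k : ℕ) (u v : G → R) : R := ∑ d ∈ s - s, corrOn s u v d ^ k

theorem energyOn_eq_sum_piFinset (s : Finset G) (k : ℕ) (u v : G → R) :
    energyOn s k u v = ∑ w ∈ Fintype.piFinset fun _ : Fin k => s,
      (∏ i, u (w i)) * ∑ d ∈ s - s, ∏ i, v (w i + d) := by
  simp_rw [mul_sum, ← prod_mul_distrib]
  rw [sum_comm]
  refine sum_congr rfl fun d _ => ?_
  rw [sum_prod_piFinset s fun _ y => u y * v (y + d), Fin.prod_const]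
  rfl

def classSum (s : Finset G) {k : ℕ} (i₀ : Fin k) (u : G → R) (r : Fin k → G) : R :=
  ∑ w ∈ Fintype.piFinset (fun _ => s) with diagRep i₀ w = r, ∏ i, u (w i)

theorem sum_prod_filter_diagRep_eq {k : ℕ} (i₀ : Fin k) {s : Finset G} {v : G → R}
    (hv : support v ⊆ s) {w : Fin k → G} (hw : w ∈ Fintype.piFinset fun _ => s) :
    ∑ w' ∈ Fintype.piFinset (fun _ => s) with diagRep i₀ w' = diagRep i₀ w, ∏ i, v (w' i)
      = ∑ d ∈ s - s, ∏ i, v (w i + d) := by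
  have hinj : Set.InjOn (fun d : G => w + fun _ => d) ↑(s - s) := fun d _ d' _ h => by
    simpa using congrFun h i₀
  calc _ = ∑ w' ∈ (s - s).image (fun d : G => w + fun _ => d), ∏ i, v (w' i) := by
        refine sum_subset (fun w' hw' => ?_) fun w' hw' hnot => ?_
        · obtain ⟨hw'S, hρ⟩ := mem_filter.1 hw'
          exact mem_image.2 ⟨w' i₀ - w i₀, sub_mem_sub (Fintype.mem_piFinset.1 hw'S i₀)
            (Fintype.mem_piFinset.1 hw i₀), (eq_add_const_of_diagRep_eq hρ).symm⟩
        · obtain ⟨d, -, rfl⟩ := mem_image.1 hw'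
          have hout : (w + fun _ => d) ∉ Fintype.piFinset fun _ => s := fun h =>
            hnot (mem_filter.2 ⟨h, diagRep_add_const i₀ w d⟩)
          obtain ⟨i, hi⟩ := not_forall.1 (mt Fintype.mem_piFinset.2 hout)
          exact prod_eq_zero (mem_univ i) (notMem_support.1 fun h => hi (hv h))
    _ = _ := sum_image hinj

theorem energyOn_eq_sum_classSum_mul {k : ℕ} (i₀ : Fin k) {s : Finset G} (u : G → R)
    {v : G → R} (hv : support v ⊆ s) :
    energyOn s k u v = ∑ r ∈ (Fintype.piFinset fun _ => s).image (diagRep i₀),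
      classSum s i₀ u r * classSum s i₀ v r := by
  rw [energyOn_eq_sum_piFinset]
  refine (sum_congr rfl fun w hw => ?_).trans (sum_mul_sum_fiber_eq_sum_image _ _ _ _)
  rw [sum_prod_filter_diagRep_eq i₀ hv hw]

end Correlation

section Positivity
variable {G R : Type*} [AddCommGroup G] [DecidableEq G]
  [CommSemiring R] [LinearOrder R] [IsStrictOrderedRing R] [ExistsAddOfLE R]
  {s : Finset G} {k : ℕ} {u v : G → R}

theorem energyOn_self_nonneg (hk : 0 < k) (hu : support u ⊆ s) : 0 ≤ energyOn s k u u := by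
  rw [energyOn_eq_sum_classSum_mul ⟨0, hk⟩ u hu]
  exact sum_nonneg fun _ _ => mul_self_nonneg _

theorem sq_energyOn_le (hk : 0 < k) (hu : support u ⊆ s) (hv : support v ⊆ s) :
    energyOn s k u v ^ 2 ≤ energyOn s k u u * energyOn s k v v := by
  simp_rw [energyOn_eq_sum_classSum_mul ⟨0, hk⟩ _ hu, energyOn_eq_sum_classSum_mul ⟨0, hk⟩ _ hv,
    ← sq]
  exact sum_mul_sq_le_sq_mul_sq _ _ _

end Positivity

section Minkowski
variable {G : Type*} [AddCommGroup G] {s : Finset G} {k : ℕ} {u v : G → ℝ}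

theorem pow_abs_corrOn (h : Even k ∨ 0 ≤ u ∧ 0 ≤ v) (x : G) :
    |corrOn s u v x| ^ k = corrOn s u v x ^ k := by
  rcases h with hk | ⟨hu, hv⟩
  · exact hk.pow_abs _
  · have : 0 ≤ corrOn s u v x := sum_nonneg fun y _ => mul_nonneg (hu y) (hv _)
    rw [abs_of_nonneg this]

variable [DecidableEq G]

noncomputable def ekNorm (s : Finset G) (k : ℕ) (u : G → ℝ) : ℝ :=
  energyOn s k u u ^ ((1 : ℝ) / (2 * k))

theorem energyOn_self_eq_zero_iff (hk : k ≠ 0) (he : Even k) (hu : support u ⊆ s) :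
    energyOn s k u u = 0 ↔ u = 0 := by
  refine ⟨fun h0 => funext fun t => ?_, by rintro rfl; simp [energyOn, corrOn, hk]⟩
  by_contra ht
  have hts : t ∈ s := hu ht
  have hcorr_zero : corrOn s u u 0 ^ k = 0 :=
    (sum_eq_zero_iff_of_nonneg fun d _ => he.pow_nonneg _).1 h0 0
      (by simpa using sub_mem_sub hts hts)
  have hcorr_pos : 0 < corrOn s u u 0 :=
    sum_pos' (fun y _ => by simpa using mul_self_nonneg (u y))
      ⟨t, hts, by simpa using mul_self_pos.2 ht⟩
  exact (pow_pos hcorr_pos k).ne' hcorr_zero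

theorem energyOn_nonneg (h : Even k ∨ 0 ≤ u ∧ 0 ≤ v) : 0 ≤ energyOn s k u v :=
  sum_nonneg fun d _ => pow_abs_corrOn h d ▸ by positivity

theorem ekNorm_nonneg (hk : 0 < k) (hu : support u ⊆ s) : 0 ≤ ekNorm s k u :=
  Real.rpow_nonneg (energyOn_self_nonneg hk hu) _

theorem ekNorm_sq (hk : 0 < k) (hu : support u ⊆ s) :
    ekNorm s k u ^ 2 = energyOn s k u u ^ (1 / (k : ℝ)) := by
  rw [ekNorm, ← Real.rpow_natCast, ← Real.rpow_mul (energyOn_self_nonneg hk hu)]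
  congr 1
  field_simp
  norm_num

theorem energyOn_rpow_le_ekNorm_mul (hk : 0 < k) (hu : support u ⊆ s) (hv : support v ⊆ s)
    (h : Even k ∨ 0 ≤ u ∧ 0 ≤ v) :
    energyOn s k u v ^ (1 / (k : ℝ)) ≤ ekNorm s k u * ekNorm s k v := by
  rw [ekNorm, ekNorm, ← Real.mul_rpow (energyOn_self_nonneg hk hu) (energyOn_self_nonneg hk hv)]
  calc energyOn s k u v ^ (1 / (k : ℝ)) = (energyOn s k u v ^ 2) ^ ((1 : ℝ) / (2 * k)) := by
        rw [← Real.rpow_natCast, ← Real.rpow_mul (energyOn_nonneg h)]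
        congr 1
        field_simp
        norm_num
    _ ≤ _ := Real.rpow_le_rpow (sq_nonneg _) (sq_energyOn_le hk hu hv) (by positivity)

theorem ekNorm_add_le (hk : 0 < k) (hu : support u ⊆ s) (hv : support v ⊆ s)
    (h : Even k ∨ 0 ≤ u ∧ 0 ≤ v) :
    ekNorm s k (u + v) ≤ ekNorm s k u + ekNorm s k v := by
  set N : (G → ℝ) → ℝ := fun f => (∑ d ∈ s - s, |f d| ^ (k : ℝ)) ^ (1 / (k : ℝ))
  have hN : ∀ f g, N (f + g) ≤ N f + N g := fun f g =>
    Real.Lp_add_le _ f g (by exact_mod_cast hk)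
  have hN_corrOn : ∀ a b : G → ℝ, (Even k ∨ 0 ≤ a ∧ 0 ≤ b) →
      N (corrOn s a b) = energyOn s k a b ^ (1 / (k : ℝ)) := fun a b hab => by
    simp only [N, Real.rpow_natCast, pow_abs_corrOn hab]
    rfl
  have huv : support (u + v) ⊆ s := (support_add u v).trans (Set.union_subset hu hv)
  have h_uu : Even k ∨ 0 ≤ u ∧ 0 ≤ u := h.imp_right fun h => ⟨h.1, h.1⟩
  have h_vu : Even k ∨ 0 ≤ v ∧ 0 ≤ u := h.imp_right And.symm
  have h_vv : Even k ∨ 0 ≤ v ∧ 0 ≤ v := h.imp_right fun h => ⟨h.2, h.2⟩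
  have hsq : ekNorm s k (u + v) ^ 2 ≤ (ekNorm s k u + ekNorm s k v) ^ 2 := by
    calc ekNorm s k (u + v) ^ 2
        = N (corrOn s u u + corrOn s u v + corrOn s v u + corrOn s v v) := by
          rw [ekNorm_sq hk huv, ← corrOn_add_add,
            hN_corrOn _ _ (h.imp_right fun h => ⟨add_nonneg h.1 h.2, add_nonneg h.1 h.2⟩)]
      _ ≤ N (corrOn s u u) + N (corrOn s u v) + N (corrOn s v u) + N (corrOn s v v) := by
          linarith [hN (corrOn s u u + corrOn s u v + corrOn s v u) (corrOn s v v),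
            hN (corrOn s u u + corrOn s u v) (corrOn s v u), hN (corrOn s u u) (corrOn s u v)]
      _ ≤ ekNorm s k u * ekNorm s k u + ekNorm s k u * ekNorm s k v
          + ekNorm s k v * ekNorm s k u + ekNorm s k v * ekNorm s k v := by
          rw [hN_corrOn _ _ h_uu, hN_corrOn _ _ h, hN_corrOn _ _ h_vu, hN_corrOn _ _ h_vv]
          gcongr
          · exact energyOn_rpow_le_ekNorm_mul hk hu hu h_uu
          · exact energyOn_rpow_le_ekNorm_mul hk hu hv h
          · exact energyOn_rpow_le_ekNorm_mul hk hv hu h_vu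
          · exact energyOn_rpow_le_ekNorm_mul hk hv hv h_vv
      _ = (ekNorm s k u + ekNorm s k v) ^ 2 := by ring
  exact (pow_le_pow_iff_left₀ (ekNorm_nonneg hk huv)
    (add_nonneg (ekNorm_nonneg hk hu) (ekNorm_nonneg hk hv)) two_ne_zero).1 hsq

end Minkowski

section Complex
variable {G : Type*} [AddCommGroup G] {s : Finset G}

theorem corrC_eq_sum {h₁ : G → ℂ} (hs : support h₁ ⊆ s) (h₂ : G → ℂ) (x : G) :
    corrC h₁ h₂ x = ∑ y ∈ s, starRingEnd ℂ (h₁ y) * h₂ (y + x) :=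
  finsum_eq_sum_of_support_subset _ fun y hy => hs fun h => hy (by simp [h])

theorem corrC_ofReal {u : G → ℝ} (hu : support u ⊆ s) (v : G → ℝ) (x : G) :
    corrC (fun t => (u t : ℂ)) (fun t => (v t : ℂ)) x = corrOn s u v x := by
  rw [corrC_eq_sum (fun t ht => hu fun h => ht (by simp [h])), corrOn]
  push_cast
  simp only [Complex.conj_ofReal]

variable [DecidableEq G]

theorem finsum_corrC_pow_eq_sum {h : G → ℂ} (hs : support h ⊆ s) {k : ℕ} (hk : k ≠ 0) :
    ∑ᶠ x, corrC h h x ^ k = ∑ d ∈ s - s, corrC h h d ^ k := by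
  refine finsum_eq_sum_of_support_subset _ fun x hx => ?_
  have hx : corrC h h x ≠ 0 := fun h0 => hx (by simp [h0, hk])
  rw [corrC_eq_sum hs] at hx
  obtain ⟨y, hy, hne⟩ := exists_ne_zero_of_sum_ne_zero hx
  exact mem_coe.2 (by simpa using sub_mem_sub (hs (right_ne_zero_of_mul hne)) hy)

theorem normEkC_ofReal {k : ℕ} (hk : 0 < k) {u : G → ℝ} (hu : support u ⊆ s) :
    normEkC k (fun t => (u t : ℂ)) = ekNorm s k u := by
  have hsupp : support (fun t => (u t : ℂ)) ⊆ s := fun t ht => hu fun h => ht (by simp [h])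
  rw [normEkC, finsum_corrC_pow_eq_sum hsupp hk.ne']
  simp_rw [corrC_ofReal hu]
  have : ∑ d ∈ s - s, ((corrOn s u u d : ℝ) : ℂ) ^ k = ((energyOn s k u u : ℝ) : ℂ) := by
    push_cast [energyOn]; rfl
  rw [this, Complex.norm_real, Real.norm_of_nonneg (energyOn_self_nonneg hk hu), ekNorm]

theorem norm_finsum_corrC_pow_le {h : G → ℂ} (hs : support h ⊆ s) {m : G → ℝ}
    (hm : ∀ x, ‖h x‖ ≤ m x) {k : ℕ} (hk : k ≠ 0) :
    ‖∑ᶠ x, corrC h h x ^ k‖ ≤ energyOn s k m m := by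
  rw [finsum_corrC_pow_eq_sum hs hk]
  refine (norm_sum_le _ _).trans (sum_le_sum fun d _ => ?_)
  rw [norm_pow]
  refine pow_le_pow_left₀ (norm_nonneg _) ?_ k
  rw [corrC_eq_sum hs]
  refine (norm_sum_le _ _).trans (sum_le_sum fun y _ => ?_)
  rw [norm_mul, Complex.norm_conj]
  exact mul_le_mul (hm y) (hm _) (norm_nonneg _) ((norm_nonneg _).trans (hm y))

end Complex

section NormEk
variable {G : Type*} [AddCommGroup G] {k : ℕ}

theorem normEkC_smul (hk : k ≠ 0) (c : ℂ) (h : G → ℂ) :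
    normEkC k (c • h) = ‖c‖ * normEkC k h := by
  have hcorr : ∀ x, corrC (c • h) (c • h) x ^ k = (‖c‖ ^ (2 * k) : ℂ) • corrC h h x ^ k := by
    intro x
    rw [smul_eq_mul, pow_mul, ← mul_pow, corrC, corrC, ← smul_eq_mul, smul_finsum]
    congr 1
    refine finsum_congr fun y => ?_
    simp only [Pi.smul_apply, smul_eq_mul, map_mul, ← Complex.conj_mul']
    ring
  rw [normEkC, normEkC, finsum_congr hcorr, ← smul_finsum, norm_smul,
    Real.mul_rpow (by positivity) (norm_nonneg _), norm_pow, Complex.norm_real, norm_norm,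
    ← Real.rpow_natCast, ← Real.rpow_mul (norm_nonneg _)]
  congr 1
  have hk' : (k : ℝ) ≠ 0 := Nat.cast_ne_zero.2 hk
  rw [Nat.cast_mul, Nat.cast_two, mul_one_div_cancel (by positivity), Real.rpow_one]

theorem normEkC_add_le (hk : 0 < k) {f g : G → ℂ} (hf : (support f).Finite)
    (hg : (support g).Finite) :
    normEkC k (f + g) ≤ normEkC k (fun t => (‖f t‖ : ℂ)) + normEkC k (fun t => (‖g t‖ : ℂ)) := by
  classical
  set s := (hf.union hg).toFinset
  have hfs : support f ⊆ s := by simp [s]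
  have hgs : support g ⊆ s := by simp [s]
  have hnf : support (fun t => ‖f t‖) ⊆ s := fun t ht => hfs fun h => ht (by simp [h])
  have hng : support (fun t => ‖g t‖) ⊆ s := fun t ht => hgs fun h => ht (by simp [h])
  rw [normEkC_ofReal hk hnf, normEkC_ofReal hk hng]
  calc normEkC k (f + g) ≤ ekNorm s k ((fun t => ‖f t‖) + fun t => ‖g t‖) :=
        Real.rpow_le_rpow (norm_nonneg _)
          (norm_finsum_corrC_pow_le ((support_add f g).trans (Set.union_subset hfs hgs))
            (fun x => norm_add_le _ _) hk.ne') (by positivity)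
    _ ≤ _ := ekNorm_add_le hk hnf hng (Or.inr ⟨fun t => norm_nonneg _, fun t => norm_nonneg _⟩)

theorem normEkC_ofReal_eq_zero_iff (hk : 0 < k) (he : Even k) {f : G → ℝ}
    (hf : (support f).Finite) : normEkC k (fun t => (f t : ℂ)) = 0 ↔ f = 0 := by
  classical
  have hfs : support f ⊆ hf.toFinset := by simp
  rw [normEkC_ofReal hk hfs, ekNorm, Real.rpow_eq_zero (energyOn_self_nonneg hk hfs)
    (by positivity), energyOn_self_eq_zero_iff hk.ne' he hfs]

theorem normEkC_ofReal_add_le (hk : 0 < k) (he : Even k) {f g : G → ℝ}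
    (hf : (support f).Finite) (hg : (support g).Finite) :
    normEkC k (fun t => ((f t + g t : ℝ) : ℂ))
      ≤ normEkC k (fun t => (f t : ℂ)) + normEkC k (fun t => (g t : ℂ)) := by
  classical
  set s := (hf.union hg).toFinset
  have hfs : support f ⊆ s := by simp [s]
  have hgs : support g ⊆ s := by simp [s]
  have hfgs : support (f + g) ⊆ s := (support_add f g).trans (Set.union_subset hfs hgs)
  rw [normEkC_ofReal hk hfs, normEkC_ofReal hk hgs]
  exact (normEkC_ofReal hk hfgs).trans_le (ekNorm_add_le hk hfs hgs (Or.inl he))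

end NormEk

theorem stmt_12 {G : Type*} [AddCommGroup G] (k : ℕ) (hk : 2 ≤ k) :
    (∀ f g : G → ℂ, (Function.support f).Finite → (Function.support g).Finite →
        normEkC k (f + g)
          ≤ normEkC k (fun t => (‖f t‖ : ℂ))
            + normEkC k (fun t => (‖g t‖ : ℂ)))
    ∧ (Even k →
        (∀ f : G → ℝ, 0 ≤ normEkC k (fun t => (f t : ℂ)))
        ∧ (∀ f : G → ℝ, (Function.support f).Finite →
            (normEkC k (fun t => (f t : ℂ)) = 0 ↔ f = 0))
        ∧ (∀ (c : ℝ) (f : G → ℝ),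
            normEkC k (fun t => ((c * f t : ℝ) : ℂ)) = |c| * normEkC k (fun t => (f t : ℂ)))
        ∧ (∀ f g : G → ℝ, (Function.support f).Finite → (Function.support g).Finite →
            normEkC k (fun t => ((f t + g t : ℝ) : ℂ))
              ≤ normEkC k (fun t => (f t : ℂ)) + normEkC k (fun t => (g t : ℂ)))) := by
  have hk₀ : 0 < k := by omega
  refine ⟨fun f g hf hg => normEkC_add_le hk₀ hf hg, fun he => ⟨fun f => ?_,
    fun f hf => normEkC_ofReal_eq_zero_iff hk₀ he hf, fun c f => ?_,
    fun f g hf hg => normEkC_ofReal_add_le hk₀ he hf hg⟩⟩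
  · exact Real.rpow_nonneg (norm_nonneg _) _
  · have hsmul : (fun t => ((c * f t : ℝ) : ℂ)) = (c : ℂ) • fun t => (f t : ℂ) := by
      funext t
      simp
    rw [hsmul, normEkC_smul hk₀.ne', Complex.norm_real, Real.norm_eq_abs]
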